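/- arXiv:math/0404413 — 2 statements merged into one kernel-verified Lean document; each statement's English description precedes it below -/
import Mathlib

section
/- Under the hypotheses of the gradient inequality with exponent γ, if γ ∈ (1/2, 1) then along any trajectory m_t of -grad f converging to m_∞ there exist constants C and T with d(m_t, m_∞) ≤ C·t^((γ-1)/(2γ-1)) for t > T; if γ = 1/2 then there exist C, k, T with d(m_t, m_∞) ≤ C·e^(-kt) for t > T. -/
open Filter Topology

set_option maxHeartbeats 1600000 in
/-- Rate of convergence of a negative gradient flow trajectory to its limit,
under a Lojasiewicz gradient inequality with exponent `γ`: polynomial decay for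
`γ ∈ (1/2,1)` and exponential decay for `γ = 1/2`. -/
theorem stmt3 {E : Type*} [NormedAddCommGroup E] [InnerProductSpace ℝ E] [CompleteSpace E]
    (f : E → ℝ) (hf : ContDiff ℝ (⊤ : ℕ∞) f) (hproper : IsProperMap f)
    (hbdd : BddBelow (Set.range f))
    (m : ℝ → E) (hm : ∀ t : ℝ, 0 ≤ t → HasDerivAt m (-gradient f (m t)) t)
    (minf : E) (hlim : Tendsto m atTop (𝓝 minf)) (hcrit : gradient f minf = 0)
    (γ : ℝ) (hγ1 : 1/2 ≤ γ) (hγ2 : γ < 1)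
    (U : Set E) (hU : U ∈ 𝓝 minf) (C₀ : ℝ) (hC₀ : 0 < C₀)
    (hloj : ∀ x ∈ U, C₀ * |f x - f minf| ^ γ ≤ ‖gradient f x‖) :
    (γ ∈ Set.Ioo (1/2 : ℝ) 1 → ∃ C T : ℝ, ∀ t > T,
        ‖m t - minf‖ ≤ C * t ^ ((γ - 1) / (2 * γ - 1))) ∧
    (γ = 1/2 → ∃ C k T : ℝ, 0 < k ∧ ∀ t > T,
        ‖m t - minf‖ ≤ C * Real.exp (-k * t)) := by
  have hfd : Differentiable ℝ f := hf.differentiable (by simp)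
  set c := f minf with hc
  set h : ℝ → ℝ := fun t => f (m t) - c with hh
  set G : ℝ → ℝ := fun t => ‖gradient f (m t)‖ with hGdef
  -- derivative of h
  have hder : ∀ t : ℝ, 0 ≤ t → HasDerivAt h (-(G t)^2) t := by
    intro t ht
    have h1 : HasFDerivAt f (fderiv ℝ f (m t)) (m t) := (hfd (m t)).hasFDerivAt
    have h2 := h1.comp_hasDerivAt t (hm t ht)
    have h3 : fderiv ℝ f (m t) (-gradient f (m t)) = -(G t)^2 := by
      have h4 : fderiv ℝ f (m t) = InnerProductSpace.toDual ℝ E (gradient f (m t)) := by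
        simp [gradient, LinearIsometryEquiv.apply_symm_apply]
      rw [h4, InnerProductSpace.toDual_apply_apply, inner_neg_right, real_inner_self_eq_norm_sq]
    rw [h3] at h2
    exact h2.sub_const _
  have hGnonneg : ∀ t, 0 ≤ G t := fun t => norm_nonneg _
  -- h is antitone on [0,∞)
  have hcont : ContinuousOn h (Set.Ici (0:ℝ)) :=
    fun t ht => (hder t ht).continuousAt.continuousWithinAt
  have hanti : AntitoneOn h (Set.Ici (0:ℝ)) := by
    apply antitoneOn_of_hasDerivWithinAt_nonpos (convex_Ici 0) hcont
      (f' := fun t => -(G t)^2)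
    · intro t ht
      rw [interior_Ici] at ht
      exact (hder t (le_of_lt ht)).hasDerivWithinAt
    · intro t ht
      exact neg_nonpos.2 (sq_nonneg _)
  -- h tends to 0
  have hto0 : Tendsto h atTop (𝓝 0) := by
    have : Tendsto (fun t => f (m t)) atTop (𝓝 c) := (hf.continuous.tendsto minf).comp hlim
    simpa using this.sub_const c
  -- h is nonnegative on [0,∞)
  have hnonneg : ∀ t : ℝ, 0 ≤ t → 0 ≤ h t := by
    intro t ht
    have : (0:ℝ) ≤ h t := by
      refine le_of_tendsto hto0 ?_
      filter_upwards [eventually_ge_atTop t] with s hs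
      exact hanti ht (le_trans ht hs) hs
    exact this
  -- eventually in U
  obtain ⟨T₁, hT₁⟩ : ∃ T₁ : ℝ, ∀ t ≥ T₁, m t ∈ U := by
    have := hlim.eventually (eventually_of_mem hU (fun x hx => hx))
    exact eventually_atTop.1 this
  set T₀ : ℝ := max T₁ 0 with hT₀def
  have hT₀0 : (0:ℝ) ≤ T₀ := le_max_right _ _
  have hmemU : ∀ t ≥ T₀, m t ∈ U := fun t ht => hT₁ t (le_trans (le_max_left _ _) ht)
  -- gradient lower bound
  have hgl : ∀ t ≥ T₀, C₀ * (h t) ^ γ ≤ G t := by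
    intro t ht
    have := hloj (m t) (hmemU t ht)
    rwa [abs_of_nonneg (hnonneg t (le_trans hT₀0 ht))] at this
  have hγpos : 0 < γ := lt_of_lt_of_le (by norm_num) hγ1
  have h1γ : 0 < 1 - γ := by linarith
  set k : ℝ := ((1 - γ) * C₀)⁻¹ with hkdef
  have hkpos : 0 < k := inv_pos.2 (mul_pos h1γ hC₀)
  -- main distance bound in the nondegenerate case
  have distb : (∀ t ≥ T₀, 0 < h t) →
      ∀ t ≥ T₀, ‖m t - minf‖ ≤ (h t) ^ (1 - γ) * k := by
    intro hpos t ht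
    have ht0 : (0:ℝ) ≤ t := le_trans hT₀0 ht
    have hψ : ∀ u ≥ T₀, HasDerivAt (fun v => h v ^ (1 - γ))
        (-(G u)^2 * (1 - γ) * h u ^ (-γ)) u := by
      intro u hu
      have hd := (hder u (le_trans hT₀0 hu)).rpow_const
        (p := 1 - γ) (Or.inl (ne_of_gt (hpos u hu)))
      have he : (1 - γ) - 1 = -γ := by ring
      rwa [he] at hd
    have key : ∀ s ≥ t, ‖m s - m t‖ ≤ (h t ^ (1 - γ) - h s ^ (1 - γ)) * k := by
      intro s hs
      set B : ℝ → ℝ := fun u => (h t ^ (1 - γ) - h u ^ (1 - γ)) * k with hBdef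
      set B' : ℝ → ℝ := fun u => (G u)^2 * (1 - γ) * h u ^ (-γ) * k with hB'def
      have hBd : ∀ u ≥ T₀, HasDerivAt B (B' u) u := by
        intro u hu
        have hd := ((hasDerivAt_const u (h t ^ (1 - γ))).sub (hψ u hu)).mul_const k
        refine hd.congr_deriv ?_
        simp only [hB'def]
        try ring
      have hfence := image_norm_le_of_norm_deriv_right_le_deriv_boundary'
        (f := fun u => m u - m t) (f' := fun u => -gradient f (m u))
        (a := t) (b := s) (B := B) (B' := B')
        (fun u hu => (((hm u (le_trans ht0 hu.1)).sub_const
          (m t)).continuousAt.continuousWithinAt))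
        (fun u hu => ((hm u (le_trans ht0 hu.1)).sub_const (m t)).hasDerivWithinAt)
        (by simp [hBdef])
        (fun u hu => (hBd u (le_trans ht hu.1)).continuousAt.continuousWithinAt)
        (fun u hu => (hBd u (le_trans ht hu.1)).hasDerivWithinAt)
        ?_
      · exact hfence (Set.right_mem_Icc.2 hs)
      · intro u hu
        have huT : u ≥ T₀ := le_trans ht hu.1
        have hu0 : 0 < h u := hpos u huT
        have hlb := hgl u huT
        have hpow : 0 < h u ^ γ := Real.rpow_pos_of_pos hu0 γ
        rw [norm_neg]
        have e : B' u = G u * G u / (C₀ * h u ^ γ) := by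
          simp only [hB'def, hkdef, Real.rpow_neg hu0.le]
          field_simp
        rw [e, le_div_iff₀ (by positivity)]
        nlinarith [hGnonneg u]
    have key2 : ∀ s ≥ t, ‖m s - m t‖ ≤ h t ^ (1 - γ) * k := by
      intro s hs
      refine le_trans (key s hs) ?_
      have := Real.rpow_nonneg (hnonneg s (le_trans ht0 hs)) (1 - γ)
      nlinarith [hkpos.le]
    have hl : Tendsto (fun s => ‖m s - m t‖) atTop (𝓝 ‖minf - m t‖) :=
      ((hlim.sub tendsto_const_nhds).norm)
    have hev : ∀ᶠ s in atTop, ‖m s - m t‖ ≤ h t ^ (1 - γ) * k := by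
      filter_upwards [eventually_ge_atTop t] with s hs
      exact key2 s hs
    have hfin := le_of_tendsto hl hev
    rwa [norm_sub_rev] at hfin
  -- degenerate case: trajectory eventually equals minf
  have degen : ∀ t₀ ≥ T₀, h t₀ = 0 → ∀ t ≥ t₀ + 1, m t = minf := by
    intro t₀ ht₀ h0 t ht
    have ht₀0 : (0:ℝ) ≤ t₀ := le_trans hT₀0 ht₀
    have hzero : ∀ u ≥ t₀, h u = 0 := fun u hu =>
      le_antisymm (h0 ▸ hanti ht₀0 (le_trans ht₀0 hu) hu) (hnonneg u (le_trans ht₀0 hu))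
    have hm0 : ∀ u > t₀, HasDerivAt m 0 u := by
      intro u hu
      have hu0 : (0:ℝ) ≤ u := le_trans ht₀0 hu.le
      have hd := hder u hu0
      have hconst : HasDerivAt h 0 u := by
        have hev : h =ᶠ[𝓝 u] fun _ => 0 := by
          filter_upwards [Ioi_mem_nhds hu] with v hv
          exact hzero v (le_of_lt hv)
        exact (hasDerivAt_const u 0).congr_of_eventuallyEq hev
      have huniq : -(G u)^2 = 0 := hd.unique hconst
      have hG0 : gradient f (m u) = 0 := by
        have : G u = 0 := by nlinarith [hGnonneg u]
        simpa [hGdef] using this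
      have hdm := hm u hu0
      rwa [hG0, neg_zero] at hdm
    have hconstm : ∀ s ≥ t, m s = m t := by
      intro s hs
      have hc := constant_of_has_deriv_right_zero (f := m) (a := t) (b := s)
        (fun u hu => (hm0 u (lt_of_lt_of_le (by linarith) hu.1)).continuousAt.continuousWithinAt)
        (fun u hu => (hm0 u (lt_of_lt_of_le (by linarith) hu.1)).hasDerivWithinAt)
      exact hc s (Set.right_mem_Icc.2 hs)
    have hcm : Tendsto m atTop (𝓝 (m t)) := by
      refine Tendsto.congr' ?_ tendsto_const_nhds
      filter_upwards [eventually_ge_atTop t] with s hs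
      exact (hconstm s hs).symm
    exact tendsto_nhds_unique hcm hlim
  constructor
  · rintro ⟨hγlt, -⟩
    by_cases hcase : ∀ u ≥ T₀, 0 < h u
    · set α : ℝ := 2*γ - 1 with hαdef
      have hαpos : 0 < α := by rw [hαdef]; linarith
      have hα0 : α ≠ 0 := ne_of_gt hαpos
      set e : ℝ := (γ - 1) / α with hedef
      have hφ : ∀ u ≥ T₀, HasDerivAt (fun v => h v ^ (-α))
          (-(G u)^2 * (-α) * h u ^ (-α - 1)) u := fun u hu =>
        (hder u (le_trans hT₀0 hu)).rpow_const (p := -α) (Or.inl (ne_of_gt (hcase u hu)))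
      have hμd : ∀ u ≥ T₀, HasDerivAt (fun v => h v ^ (-α) - α * C₀^2 * v)
          (-(G u)^2 * (-α) * h u ^ (-α - 1) - α * C₀^2) u := by
        intro u hu
        simpa [Pi.sub_def] using (hφ u hu).sub ((hasDerivAt_id u).const_mul (α * C₀^2))
      have hμmono : MonotoneOn (fun v => h v ^ (-α) - α * C₀^2 * v) (Set.Ici T₀) := by
        apply monotoneOn_of_hasDerivWithinAt_nonneg (convex_Ici T₀)
          (f' := fun u => -(G u)^2 * (-α) * h u ^ (-α - 1) - α * C₀^2)
          (fun u hu => (hμd u hu).continuousAt.continuousWithinAt)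
        · intro u hu
          rw [interior_Ici] at hu
          exact (hμd u hu.le).hasDerivWithinAt
        · intro u hu
          rw [interior_Ici] at hu
          have hu0 : 0 < h u := hcase u hu.le
          have e1 : h u ^ γ * h u ^ γ * h u ^ (-α - 1) = 1 := by
            rw [← Real.rpow_add hu0, ← Real.rpow_add hu0,
              show γ + γ + (-α - 1) = 0 by rw [hαdef]; ring, Real.rpow_zero]
          have e2 : (C₀ * h u ^ γ)^2 ≤ (G u)^2 :=
            pow_le_pow_left₀ (by positivity) (hgl u hu.le) 2
          have e3 : C₀^2 ≤ (G u)^2 * h u ^ (-α - 1) := by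
            have h4 : (C₀ * h u ^ γ)^2 * h u ^ (-α-1) ≤ (G u)^2 * h u ^ (-α-1) :=
              mul_le_mul_of_nonneg_right e2 (Real.rpow_nonneg hu0.le _)
            have h5 : (C₀ * h u ^ γ)^2 * h u ^ (-α-1)
                = C₀^2 * (h u ^ γ * h u ^ γ * h u ^ (-α-1)) := by ring
            rw [h5, e1, mul_one] at h4
            exact h4
          have h6 := mul_le_mul_of_nonneg_left e3 hαpos.le
          nlinarith [h6]
      have hφlb : ∀ u ≥ T₀, α * C₀^2 * (u - T₀) ≤ h u ^ (-α) := by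
        intro u hu
        have h7 := hμmono Set.self_mem_Ici (Set.mem_Ici.2 hu) hu
        have hT0pos : 0 < h T₀ ^ (-α) := Real.rpow_pos_of_pos (hcase T₀ le_rfl) _
        simp only at h7
        nlinarith [h7, hT0pos]
      refine ⟨(α * C₀^2 / 2) ^ e * k, max (2*T₀) 1, ?_⟩
      intro t htT
      have ht1 : (1:ℝ) < t := lt_of_le_of_lt (le_max_right _ _) htT
      have htpos : (0:ℝ) < t := by linarith
      have ht2T : 2*T₀ < t := lt_of_le_of_lt (le_max_left _ _) htT
      have htT₀ : T₀ ≤ t := by linarith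
      have hhalf : t/2 ≤ t - T₀ := by linarith
      set Y : ℝ := α * C₀^2 / 2 * t with hYdef
      have hYpos : 0 < Y := by rw [hYdef]; positivity
      have hYle : Y ≤ α * C₀^2 * (t - T₀) := by
        have h8 := mul_le_mul_of_nonneg_left hhalf (mul_pos hαpos (pow_pos hC₀ 2)).le
        calc Y = α*C₀^2 * (t/2) := by rw [hYdef]; ring
        _ ≤ _ := h8
      have hYle2 : Y ≤ h t ^ (-α) := le_trans hYle (hφlb t htT₀)
      have hht : h t ≤ Y ^ (-α⁻¹) := by
        have h1 : (h t ^ (-α)) ^ (-α⁻¹) ≤ Y ^ (-α⁻¹) :=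
          Real.rpow_le_rpow_of_nonpos hYpos hYle2 (neg_nonpos.2 (inv_nonneg.2 hαpos.le))
        have h2 : (h t ^ (-α)) ^ (-α⁻¹) = h t := by
          rw [← Real.rpow_mul (hcase t htT₀).le,
            show (-α) * (-α⁻¹) = 1 by field_simp, Real.rpow_one]
        rwa [h2] at h1
      have hd := distb hcase t htT₀
      have hmono : h t ^ (1 - γ) ≤ (Y ^ (-α⁻¹)) ^ (1 - γ) :=
        Real.rpow_le_rpow (hnonneg t (le_trans hT₀0 htT₀)) hht h1γ.le
      have heq : (Y ^ (-α⁻¹)) ^ (1 - γ) = (α * C₀^2/2) ^ e * t ^ e := by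
        rw [← Real.rpow_mul hYpos.le,
          show -α⁻¹ * (1 - γ) = e by rw [hedef]; field_simp; ring,
          hYdef, Real.mul_rpow (by positivity) htpos.le]
      calc ‖m t - minf‖ ≤ h t ^ (1-γ) * k := hd
        _ ≤ (Y ^ (-α⁻¹)) ^ (1 - γ) * k := mul_le_mul_of_nonneg_right hmono hkpos.le
        _ = ((α*C₀^2/2)^e * k) * t^e := by rw [heq]; ring
    · push_neg at hcase
      obtain ⟨u, hu, hu0⟩ := hcase
      have h0 : h u = 0 := le_antisymm hu0 (hnonneg u (le_trans hT₀0 hu))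
      refine ⟨0, u + 1, ?_⟩
      intro t htu
      rw [degen u hu h0 t htu.le, sub_self, norm_zero, zero_mul]
  · intro hγeq
    have hρd : ∀ u ≥ T₀, HasDerivAt (fun v => h v * Real.exp (C₀^2 * v))
        (-(G u)^2 * Real.exp (C₀^2*u) + h u * (Real.exp (C₀^2*u) * C₀^2)) u := by
      intro u hu
      have he : HasDerivAt (fun v => Real.exp (C₀^2 * v)) (Real.exp (C₀^2*u) * C₀^2) u := by
        have h9 := ((hasDerivAt_id u).const_mul (C₀^2)).exp
        simpa using h9
      exact (hder u (le_trans hT₀0 hu)).mul he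
    have hρanti : AntitoneOn (fun v => h v * Real.exp (C₀^2*v)) (Set.Ici T₀) := by
      apply antitoneOn_of_hasDerivWithinAt_nonpos (convex_Ici T₀)
        (f' := fun u => -(G u)^2 * Real.exp (C₀^2*u) + h u * (Real.exp (C₀^2*u) * C₀^2))
        (fun u hu => (hρd u hu).continuousAt.continuousWithinAt)
      · intro u hu
        rw [interior_Ici] at hu
        exact (hρd u hu.le).hasDerivWithinAt
      · intro u hu
        rw [interior_Ici] at hu
        have hu0 : 0 ≤ h u := hnonneg u (le_trans hT₀0 hu.le)
        have hlb := hgl u hu.le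
        have hsq : C₀^2 * h u ≤ (G u)^2 := by
          have e1 : h u ^ γ * h u ^ γ = h u := by
            rw [← Real.rpow_add' hu0 (by rw [hγeq]; norm_num),
              show γ + γ = (1:ℝ) by rw [hγeq]; norm_num, Real.rpow_one]
          have e2 : (C₀ * h u ^ γ)^2 ≤ (G u)^2 :=
            pow_le_pow_left₀ (by positivity) hlb 2
          nlinarith [e1, e2]
        have hex : (0:ℝ) < Real.exp (C₀^2 * u) := Real.exp_pos _
        nlinarith [hsq, hex]
    by_cases hcase : ∀ u ≥ T₀, 0 < h u
    · set A : ℝ := h T₀ * Real.exp (C₀^2 * T₀) with hAdef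
      have hA0 : 0 ≤ A := mul_nonneg (hnonneg T₀ hT₀0) (Real.exp_pos _).le
      have hdecay : ∀ t ≥ T₀, h t ≤ A * Real.exp (-(C₀^2) * t) := by
        intro t ht
        have h2 : h t * Real.exp (C₀^2*t) ≤ A := hρanti Set.self_mem_Ici (Set.mem_Ici.2 ht) ht
        have h3 := mul_le_mul_of_nonneg_right h2 (Real.exp_pos (-(C₀^2)*t)).le
        calc h t = h t * (Real.exp (C₀^2*t) * Real.exp (-(C₀^2)*t)) := by
              rw [← Real.exp_add, show C₀^2*t + -(C₀^2)*t = 0 by ring, Real.exp_zero, mul_one]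
          _ = h t * Real.exp (C₀^2*t) * Real.exp (-(C₀^2)*t) := by ring
          _ ≤ A * Real.exp (-(C₀^2)*t) := h3
      refine ⟨A ^ (1-γ) * k, C₀^2/2, T₀, by positivity, ?_⟩
      intro t ht
      have htT₀ : T₀ ≤ t := ht.le
      have hd := distb hcase t htT₀
      have hmono : h t ^ (1 - γ) ≤ (A * Real.exp (-(C₀^2)*t)) ^ (1-γ) :=
        Real.rpow_le_rpow (hnonneg t (le_trans hT₀0 htT₀)) (hdecay t htT₀) h1γ.le
      have heq : (A * Real.exp (-(C₀^2)*t)) ^ (1-γ) = A ^ (1-γ) * Real.exp (-(C₀^2/2)*t) := by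
        rw [Real.mul_rpow hA0 (Real.exp_pos _).le, ← Real.exp_mul,
          show (-(C₀^2)*t) * (1-γ) = -(C₀^2/2)*t by rw [hγeq]; ring]
      calc ‖m t - minf‖ ≤ h t ^ (1-γ) * k := hd
        _ ≤ (A ^ (1-γ) * Real.exp (-(C₀^2/2)*t)) * k := by
            rw [← heq]; exact mul_le_mul_of_nonneg_right hmono hkpos.le
        _ = (A ^ (1-γ) * k) * Real.exp (-(C₀^2/2)*t) := by ring
    · push_neg at hcase
      obtain ⟨u, hu, hu0⟩ := hcase
      have h0 : h u = 0 := le_antisymm hu0 (hnonneg u (le_trans hT₀0 hu))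
      refine ⟨0, 1, u + 1, one_pos, ?_⟩
      intro t htu
      rw [degen u hu h0 t htu.le, sub_self, norm_zero, zero_mul]
end

section
/- Let U(1) act on ℂP¹ by z·[w₀ : w₁] = [z^(-a) w₀ : z^(-b) w₁] with a < b integers, moment map Φ([w₀:w₁]) = (a|w₀|² + b|w₁|²)/(|w₀|² + |w₁|²). Then the pushforward under Φ of the Liouville measure exp(ω) equals (1/(b-a))·χ_{[a,b]} times Lebesgue measure on ℝ, i.e., the Duistermaat–Heckman measure is the normalized uniform measure on the interval [a,b]. -/
/-!
The moment map `Φ(z) = (a + b|z|²)/(1 + |z|²)` of the affine chart `z = w₁/w₀` takes values in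
`[a, b)` and increases with `|z|`, so for `a ≤ x < b` the sublevel set `{Φ ≤ x}` is the disc
`|z| ≤ R` with `R² = (x - a)/(b - x)`. Against the polar area element `2πr dr` the Liouville
density `(b - a)/(π(1 + r²)²)` has the antiderivative `-(b - a)/(1 + r²)`, so this disc has
mass `(b - a)R²/(1 + R²) = x - a`, the length of `[a, x]`. Both measures therefore have the same
distribution function on `ℝ`.
-/

open MeasureTheory Set Metric Filter Real Topology

theorem Complex.setIntegral_closedBall_fun_norm {E : Type*} [NormedAddCommGroup E]
    [NormedSpace ℝ E] (f : ℝ → E) {R : ℝ} (hR : 0 ≤ R) :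
    ∫ z in closedBall (0 : ℂ) R, f ‖z‖ = (2 * π) • ∫ r in (0)..R, r • f r := by
  have hball : closedBall (0 : ℂ) R = norm ⁻¹' Iic R := by
    ext z
    simp
  have hind (z : ℂ) :
      (norm ⁻¹' Iic R).indicator (fun z => f ‖z‖) z = (Iic R).indicator f ‖z‖ :=
    indicator_comp_right norm
  have hsmul (r : ℝ) :
      r ^ (2 - 1) • (Iic R).indicator f r = (Iic R).indicator (fun r => r • f r) r := by
    rw [pow_one]
    exact (indicator_smul_apply _ (fun r => r) f r).symm
  rw [← integral_indicator measurableSet_closedBall, hball]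
  simp_rw [hind]
  rw [integral_fun_norm_addHaar volume ((Iic R).indicator f), Complex.finrank_real_complex]
  simp_rw [hsmul]
  rw [setIntegral_indicator measurableSet_Iic, Ioi_inter_Iic,
    ← intervalIntegral.integral_of_le hR]
  simp only [Measure.real, Complex.volume_ball]
  rw [mul_smul, ← Nat.cast_smul_eq_nsmul ℝ]
  norm_num

theorem tendsto_sq_div_one_add_sq_atTop :
    Tendsto (fun R : ℝ => R ^ 2 / (1 + R ^ 2)) atTop (𝓝 1) := by
  have hinv : Tendsto (fun R : ℝ => (1 + R ^ 2)⁻¹) atTop (𝓝 0) :=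
    (tendsto_atTop_add_const_left _ 1 (tendsto_pow_atTop two_ne_zero)).inv_tendsto_atTop
  refine (by simpa using tendsto_const_nhds.sub hinv :
    Tendsto (fun R : ℝ => 1 - (1 + R ^ 2)⁻¹) atTop (𝓝 1)).congr fun R => ?_
  field_simp
  ring

theorem Set.Iic_inter_Icc {α : Type*} [LinearOrder α] (a b x : α) :
    Iic x ∩ Icc a b = Icc a (min x b) := by
  ext y
  simp only [mem_inter_iff, mem_Iic, mem_Icc, le_min_iff]
  tauto

noncomputable def liouvilleDensity (c r : ℝ) : ℝ := c / (π * (1 + r ^ 2) ^ 2)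

/-- The Liouville measure of `ℂP¹` of total mass `c`, in the affine chart `z = w₁/w₀`. -/
noncomputable def liouvilleMeasure (c : ℝ) : Measure ℂ :=
  volume.withDensity fun z => ENNReal.ofReal (liouvilleDensity c ‖z‖)

noncomputable def momentMap (a b : ℝ) (z : ℂ) : ℝ := (a + b * ‖z‖ ^ 2) / (1 + ‖z‖ ^ 2)

section liouvilleMeasure

variable {c : ℝ}

theorem continuous_liouvilleDensity (c : ℝ) : Continuous (liouvilleDensity c) :=
  continuous_const.div (by fun_prop) fun r => by positivity

theorem integral_mul_liouvilleDensity (c R : ℝ) :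
    ∫ r in (0)..R, r * liouvilleDensity c r = c / (2 * π) * (R ^ 2 / (1 + R ^ 2)) := by
  have hderiv (r : ℝ) : HasDerivAt (fun t => -(c / (2 * π)) * (1 + t ^ 2)⁻¹)
      (r * liouvilleDensity c r) r := by
    have hsq : HasDerivAt (fun t : ℝ => 1 + t ^ 2) (2 * r) r := by
      simpa using (hasDerivAt_pow 2 r).const_add 1
    refine ((hsq.inv (by positivity)).const_mul _).congr_deriv ?_
    unfold liouvilleDensity
    field_simp
  rw [intervalIntegral.integral_eq_sub_of_hasDerivAt (fun r _ => hderiv r)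
    ((continuous_id.mul (continuous_liouvilleDensity c)).intervalIntegrable _ _)]
  field_simp
  ring

theorem liouvilleMeasure_closedBall (hc : 0 ≤ c) {R : ℝ} (hR : 0 ≤ R) :
    liouvilleMeasure c (closedBall 0 R) = ENNReal.ofReal (c * (R ^ 2 / (1 + R ^ 2))) := by
  have hint : IntegrableOn (fun z : ℂ => liouvilleDensity c ‖z‖) (closedBall 0 R) :=
    ((continuous_liouvilleDensity c).comp continuous_norm).continuousOn.integrableOn_compact
      (isCompact_closedBall _ _)
  rw [liouvilleMeasure, withDensity_apply _ measurableSet_closedBall,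
    ← ofReal_integral_eq_lintegral_ofReal hint
      (.of_forall fun z => div_nonneg hc (by positivity)),
    Complex.setIntegral_closedBall_fun_norm _ hR]
  simp_rw [smul_eq_mul, integral_mul_liouvilleDensity]
  congr 1
  field_simp

theorem liouvilleMeasure_univ (hc : 0 ≤ c) : liouvilleMeasure c univ = ENNReal.ofReal c := by
  have hmono : Monotone fun n : ℕ => closedBall (0 : ℂ) n :=
    fun m n hmn => closedBall_subset_closedBall (Nat.cast_le.2 hmn)
  have hlim := tendsto_measure_iUnion_atTop (μ := liouvilleMeasure c) hmono
  rw [iUnion_closedBall_nat] at hlim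
  refine tendsto_nhds_unique hlim ?_
  simp only [Function.comp_def, liouvilleMeasure_closedBall hc (Nat.cast_nonneg _)]
  refine (ENNReal.continuous_ofReal.tendsto c).comp ?_
  simpa using (tendsto_sq_div_one_add_sq_atTop.comp tendsto_natCast_atTop_atTop).const_mul c

theorem isFiniteMeasure_liouvilleMeasure (hc : 0 ≤ c) : IsFiniteMeasure (liouvilleMeasure c) :=
  ⟨by simp [liouvilleMeasure_univ hc]⟩

end liouvilleMeasure

section momentMap

variable {a b x : ℝ}

theorem continuous_momentMap : Continuous (momentMap a b) :=
  continuous_const.add (by fun_prop) |>.div (by fun_prop) fun z => by positivity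

theorem le_momentMap (hab : a ≤ b) (z : ℂ) : a ≤ momentMap a b z := by
  rw [momentMap, le_div_iff₀ (by positivity)]
  nlinarith [sq_nonneg ‖z‖]

theorem momentMap_lt (hab : a < b) (z : ℂ) : momentMap a b z < b := by
  rw [momentMap, div_lt_iff₀ (by positivity)]
  linarith

theorem momentMap_le_iff (hxb : x < b) (z : ℂ) :
    momentMap a b z ≤ x ↔ ‖z‖ ^ 2 ≤ (x - a) / (b - x) := by
  rw [momentMap, div_le_iff₀ (by positivity), le_div_iff₀ (sub_pos.2 hxb)]
  constructor <;> intro h <;> linarith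

theorem momentMap_preimage_Iic_of_lt (hab : a ≤ b) (hxa : x < a) :
    momentMap a b ⁻¹' Iic x = ∅ :=
  eq_empty_of_forall_notMem fun z hz => (le_momentMap hab z).not_gt (lt_of_le_of_lt hz hxa)

theorem momentMap_preimage_Iic (hax : a ≤ x) (hxb : x < b) :
    momentMap a b ⁻¹' Iic x = closedBall 0 √((x - a) / (b - x)) := by
  ext z
  rw [mem_preimage, mem_Iic, momentMap_le_iff hxb, mem_closedBall_zero_iff,
    Real.le_sqrt (norm_nonneg z) (div_nonneg (sub_nonneg.2 hax) (sub_pos.2 hxb).le)]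

theorem momentMap_preimage_Iic_of_le (hab : a < b) (hbx : b ≤ x) :
    momentMap a b ⁻¹' Iic x = univ :=
  eq_univ_of_forall fun z => ((momentMap_lt hab z).trans_le hbx).le

end momentMap

theorem map_momentMap_liouvilleMeasure {a b : ℝ} (hab : a < b) :
    (liouvilleMeasure (b - a)).map (momentMap a b) = volume.restrict (Icc a b) := by
  have hc : 0 ≤ b - a := (sub_pos.2 hab).le
  have := isFiniteMeasure_liouvilleMeasure hc
  refine Measure.ext_of_Iic _ _ fun x => ?_
  rw [Measure.map_apply continuous_momentMap.measurable measurableSet_Iic,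
    Measure.restrict_apply measurableSet_Iic, Iic_inter_Icc, Real.volume_Icc]
  rcases lt_or_ge x a with hxa | hax
  · rw [momentMap_preimage_Iic_of_lt hab.le hxa, measure_empty, eq_comm,
      ENNReal.ofReal_eq_zero]
    linarith [min_le_left x b]
  rcases lt_or_ge x b with hxb | hbx
  · rw [momentMap_preimage_Iic hax hxb, liouvilleMeasure_closedBall hc (sqrt_nonneg _),
      sq_sqrt (div_nonneg (sub_nonneg.2 hax) (sub_pos.2 hxb).le), min_eq_left hxb.le]
    congr 1
    field_simp
    ring
  · rw [momentMap_preimage_Iic_of_le hab hbx, liouvilleMeasure_univ hc, min_eq_right hbx]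

/-- Duistermaat–Heckman for `U(1)` acting on `ℂP¹`: in the affine chart
`z = w₁/w₀`, the Liouville measure `exp(ω)` has density
`(b-a)/(π(1+|z|²)²)` and the moment map is `Φ(z) = (a + b|z|²)/(1+|z|²)`;
its pushforward under `Φ` is Lebesgue measure on `[a,b]`, i.e. the
Duistermaat–Heckman measure is `(b-a)⁻¹ χ_{[a,b]}` times `(b-a)`·Lebesgue. -/
theorem stmt8 (a b : ℤ) (hab : a < b) :
    Measure.map
      (fun z : ℂ => ((a : ℝ) + (b : ℝ) * ‖z‖ ^ 2) / (1 + ‖z‖ ^ 2))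
      (volume.withDensity
        (fun z : ℂ => ENNReal.ofReal (((b : ℝ) - (a : ℝ)) / (Real.pi * (1 + ‖z‖ ^ 2) ^ 2)))) =
    volume.restrict (Set.Icc (a : ℝ) (b : ℝ)) :=
  map_momentMap_liouvilleMeasure (Int.cast_lt.2 hab)
end
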